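/- arXiv:2408.12313 — 6 statements merged into one kernel-verified Lean document; each statement's English description precedes it below -/
import Mathlib

section
/- For any real x ≥ 0 and α ∈ (0,1), x^α = (sin(απ)/π) · [∫₀¹ x/(x+t) · t^(α-1) dt + ∫₀¹ x/(1+x·t) · t^(-α) dt]. -/
open MeasureTheory intervalIntegral Set Real

lemma beta_eval' {α : ℝ} (h0 : 0 < α) (h1 : α < 1) :
    ∫ u in (0:ℝ)..1, u ^ (α-1) * (1-u) ^ (-α) = Real.pi / Real.sin (Real.pi * α) := by
  have hs : 0 < (α:ℂ).re := by simpa using h0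
  have ht : 0 < ((1:ℂ) - (α:ℂ)).re := by
    simp [Complex.sub_re]; linarith
  have hbeta : Complex.betaIntegral α (1-α) = Complex.Gamma α * Complex.Gamma (1-α) := by
    have h := Complex.Gamma_mul_Gamma_eq_betaIntegral hs ht
    rw [h, show (α:ℂ) + (1-α) = 1 by ring, Complex.Gamma_one, one_mul]
  have hrefl := Complex.Gamma_mul_Gamma_one_sub (α:ℂ)
  have hint : Complex.betaIntegral α (1-α)
      = ((∫ u in (0:ℝ)..1, u ^ (α-1) * (1-u) ^ (-α) : ℝ) : ℂ) := by
    rw [Complex.betaIntegral, ← intervalIntegral.integral_ofReal]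
    refine intervalIntegral.integral_congr fun u hu => ?_
    rw [Set.uIcc_of_le (by norm_num : (0:ℝ) ≤ 1)] at hu
    push_cast
    rw [Complex.ofReal_cpow hu.1, Complex.ofReal_cpow (by linarith [hu.2] : 0 ≤ 1 - u)]
    push_cast
    rw [show (1:ℂ) - (α:ℂ) - 1 = -(α:ℂ) by ring]
  have hne : Complex.sin (Real.pi * α) ≠ 0 := by
    rw [show ((Real.pi : ℂ) * α) = ((Real.pi * α : ℝ) : ℂ) by push_cast; ring,
      ← Complex.ofReal_sin, Ne, Complex.ofReal_eq_zero]
    exact (Real.sin_pos_of_pos_of_lt_pi (by positivity)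
      (mul_lt_of_lt_one_right Real.pi_pos h1)).ne'
  have : ((∫ u in (0:ℝ)..1, u ^ (α-1) * (1-u) ^ (-α) : ℝ) : ℂ)
      = ((Real.pi / Real.sin (Real.pi * α) : ℝ) : ℂ) := by
    rw [← hint, hbeta, hrefl]
    push_cast [Complex.ofReal_sin]
    ring_nf
  exact_mod_cast this

/-- For any real `x ≥ 0` and `α ∈ (0,1)`,
`x^α = (sin(απ)/π) · [∫₀¹ x/(x+t) · t^(α-1) dt + ∫₀¹ x/(1+x·t) · t^(-α) dt]`. -/
theorem stmt0 (x α : ℝ) (hx : 0 ≤ x) (hα : α ∈ Set.Ioo (0 : ℝ) 1) :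
    x ^ α = Real.sin (α * Real.pi) / Real.pi *
      ((∫ t in (0:ℝ)..1, x / (x + t) * t ^ (α - 1)) +
       (∫ t in (0:ℝ)..1, x / (1 + x * t) * t ^ (-α))) := by
  obtain ⟨hα0, hα1⟩ := hα
  rcases eq_or_lt_of_le hx with rfl | hx0
  · simp [Real.zero_rpow hα0.ne']
  -- Now x > 0
  set c : ℝ := (1+x)⁻¹ with hc
  have h1x : (0:ℝ) < 1 + x := by positivity
  have hc0 : 0 < c := by positivity
  have hc1 : c < 1 := by
    rw [hc, inv_lt_one_iff₀]; right; linarith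
  set h : ℝ → ℝ := fun u => u ^ (α-1) * (1-u) ^ (-α) with hh
  -- First substitution : f₁ u = x*u/(1-u) maps Ioo 0 c onto Ioo 0 1
  have himg1 : (fun u => x*u/(1-u)) '' Ioo 0 c = Ioo 0 1 := by
    ext t
    constructor
    · rintro ⟨u, ⟨hu0, huc⟩, rfl⟩
      have h1u : 0 < 1 - u := by
        have : u < 1 := lt_trans huc hc1
        linarith
      have huc' : u * (1+x) < 1 := by
        have h' := mul_lt_mul_of_pos_right huc h1x
        rwa [inv_mul_cancel₀ h1x.ne'] at h'
      constructor
      · exact div_pos (by positivity) h1u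
      · rw [div_lt_one h1u]; nlinarith
    · rintro ⟨ht0, ht1⟩
      have hxt : 0 < x + t := by linarith
      refine ⟨t/(x+t), ⟨by positivity, ?_⟩, ?_⟩
      · rw [hc, inv_eq_one_div, div_lt_div_iff₀ hxt h1x]
        nlinarith
      · show x * (t/(x+t)) / (1 - t/(x+t)) = t
        rw [show 1 - t/(x+t) = x/(x+t) by field_simp; ring]
        field_simp
  have hinj1 : InjOn (fun u => x*u/(1-u)) (Ioo 0 c) := by
    intro a ha b hb hab
    have h1a : (1:ℝ) - a ≠ 0 := by
      have : a < 1 := lt_trans ha.2 hc1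
      intro hcon; linarith
    have h1b : (1:ℝ) - b ≠ 0 := by
      have : b < 1 := lt_trans hb.2 hc1
      intro hcon; linarith
    simp only at hab
    field_simp at hab
    have hxab : x * a = x * b := by linear_combination x * hab
    exact mul_left_cancel₀ hx0.ne' hxab
  have hderiv1 : ∀ u ∈ Ioo (0:ℝ) c,
      HasDerivWithinAt (fun u => x*u/(1-u)) (x/(1-u)^2) (Ioo 0 c) u := by
    intro u hu
    have h1u : (1:ℝ) - u ≠ 0 := by
      have : u < 1 := lt_trans hu.2 hc1
      intro hcon; linarith
    have H := (((hasDerivAt_id u).const_mul x).div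
        ((hasDerivAt_const u (1:ℝ)).sub (hasDerivAt_id u)) h1u)
    simp only [id_eq, mul_one, Pi.sub_apply, Pi.div_def] at H
    refine HasDerivAt.hasDerivWithinAt ?_
    refine H.congr_deriv ?_
    ring
  have key1 : (∫ t in (0:ℝ)..1, x / (x + t) * t ^ (α - 1))
      = x ^ α * ∫ u in Ioo (0:ℝ) c, h u := by
    rw [intervalIntegral.integral_of_le zero_le_one,
      MeasureTheory.integral_Ioc_eq_integral_Ioo, ← himg1,
      integral_image_eq_integral_abs_deriv_smul measurableSet_Ioo hderiv1 hinj1,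
      ← MeasureTheory.integral_const_mul]
    refine setIntegral_congr_fun measurableSet_Ioo fun u hu => ?_
    obtain ⟨hu0, huc⟩ := hu
    have hu1 : u < 1 := lt_trans huc hc1
    have h1u : 0 < 1 - u := by linarith
    have hA : x + x*u/(1-u) = x/(1-u) := by field_simp; ring
    have hB : x / (x + x*u/(1-u)) = 1 - u := by
      rw [hA]
      rw [div_div_eq_mul_div, mul_comm, mul_div_assoc, div_self hx0.ne', mul_one]
    have hC : (x*u/(1-u)) ^ (α-1)
        = x ^ (α-1) * u ^ (α-1) * ((1-u) ^ (α-1))⁻¹ := by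
      rw [div_eq_mul_inv, Real.mul_rpow (by positivity) (by positivity),
        Real.mul_rpow hx0.le hu0.le, Real.inv_rpow h1u.le]
    have hP : (0:ℝ) < (1-u) ^ (α-1) := Real.rpow_pos_of_pos h1u _
    have hS : (1-u) ^ (α-1) * (1-u) ^ (-α) = (1-u)⁻¹ := by
      rw [← Real.rpow_add h1u, show α-1 + -α = (-1:ℝ) by ring, Real.rpow_neg_one]
    have hS2 : (1-u) ^ (-α) = ((1-u) ^ (α-1))⁻¹ * (1-u)⁻¹ := by
      rw [eq_inv_mul_iff_mul_eq₀ hP.ne', hS]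
    have he1 : x ^ α = x * x ^ (α-1) := by
      have hr := Real.rpow_add hx0 1 (α-1)
      rw [show (1:ℝ) + (α-1) = α by ring, Real.rpow_one] at hr
      exact hr
    simp only [smul_eq_mul, hh]
    rw [hB, hC, hS2, he1, abs_of_pos (by positivity : (0:ℝ) < x/(1-u)^2)]
    field_simp
  -- Second substitution : f₂ u = (1-u)/(x*u) maps Ioo c 1 onto Ioo 0 1
  have himg2 : (fun u => (1-u)/(x*u)) '' Ioo c 1 = Ioo 0 1 := by
    ext t
    constructor
    · rintro ⟨u, ⟨huc, hu1⟩, rfl⟩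
      have hu0 : 0 < u := lt_trans hc0 huc
      have h1u : 0 < 1 - u := by linarith
      have huc' : 1 < u * (1+x) := by
        have h' := mul_lt_mul_of_pos_right huc h1x
        rwa [inv_mul_cancel₀ h1x.ne'] at h'
      constructor
      · exact div_pos h1u (by positivity)
      · rw [div_lt_one (by positivity)]; nlinarith
    · rintro ⟨ht0, ht1⟩
      have hxt : 0 < 1 + x*t := by nlinarith
      refine ⟨(1+x*t)⁻¹, ⟨?_, ?_⟩, ?_⟩
      · rw [hc, inv_lt_inv₀ h1x hxt]
        nlinarith
      · rw [inv_lt_one_iff₀]; right; nlinarith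
      · show (1 - (1+x*t)⁻¹) / (x * (1+x*t)⁻¹) = t
        field_simp
        ring
  have hinj2 : InjOn (fun u => (1-u)/(x*u)) (Ioo c 1) := by
    intro a ha b hb hab
    have ha0 : (0:ℝ) < a := lt_trans hc0 ha.1
    have hb0 : (0:ℝ) < b := lt_trans hc0 hb.1
    simp only at hab
    field_simp at hab
    have hxab : x * a = x * b := by linear_combination -x * hab
    exact mul_left_cancel₀ hx0.ne' hxab
  have hderiv2 : ∀ u ∈ Ioo c 1,
      HasDerivWithinAt (fun u => (1-u)/(x*u)) (-(1/(x*u^2))) (Ioo c 1) u := by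
    intro u hu
    have hu0 : 0 < u := lt_trans hc0 hu.1
    have hxu : x * u ≠ 0 := by positivity
    have H := (((hasDerivAt_const u (1:ℝ)).sub (hasDerivAt_id u)).div
        ((hasDerivAt_id u).const_mul x) hxu)
    simp only [id_eq, mul_one, Pi.sub_apply, Pi.div_def] at H
    refine HasDerivAt.hasDerivWithinAt ?_
    refine H.congr_deriv ?_
    field_simp
    ring
  have key2 : (∫ t in (0:ℝ)..1, x / (1 + x * t) * t ^ (-α))
      = x ^ α * ∫ u in Ioo c 1, h u := by
    rw [intervalIntegral.integral_of_le zero_le_one,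
      MeasureTheory.integral_Ioc_eq_integral_Ioo, ← himg2,
      integral_image_eq_integral_abs_deriv_smul measurableSet_Ioo hderiv2 hinj2,
      ← MeasureTheory.integral_const_mul]
    refine setIntegral_congr_fun measurableSet_Ioo fun u hu => ?_
    obtain ⟨huc, hu1⟩ := hu
    have hu0 : 0 < u := lt_trans hc0 huc
    have h1u : 0 < 1 - u := by linarith
    have hA : 1 + x * ((1-u)/(x*u)) = u⁻¹ := by
      field_simp
      ring
    have hB : x / (1 + x * ((1-u)/(x*u))) = x * u := by
      rw [hA, div_eq_mul_inv, inv_inv]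
    have hC : ((1-u)/(x*u)) ^ (-α) = (1-u) ^ (-α) * (x ^ α * u ^ α) := by
      rw [div_eq_mul_inv, Real.mul_rpow h1u.le (by positivity),
        Real.inv_rpow (by positivity), ← Real.rpow_neg (by positivity), neg_neg,
        Real.mul_rpow hx0.le hu0.le]
    have he2 : u ^ (α-1) = u ^ α * u⁻¹ := by
      have hr := Real.rpow_add hu0 α (-1)
      rw [Real.rpow_neg_one, show α + (-1:ℝ) = α-1 by ring] at hr
      exact hr
    simp only [smul_eq_mul, hh]
    rw [hB, hC, he2, abs_neg, abs_of_pos (by positivity : (0:ℝ) < 1/(x*u^2))]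
    field_simp
  -- Integrability for splitting
  have hi1 : IntervalIntegrable h volume 0 c := by
    apply (intervalIntegrable_rpow' (by linarith : (-1:ℝ) < α-1)).mul_continuousOn
    apply ContinuousOn.rpow_const (continuousOn_const.sub continuousOn_id)
    intro u hu
    left
    rw [uIcc_of_le hc0.le] at hu
    have : u ≤ c := hu.2
    intro hcon
    simp only [Pi.sub_apply, id_eq] at hcon
    nlinarith
  have hi2 : IntervalIntegrable h volume c 1 := by
    have hint : IntervalIntegrable (fun u : ℝ => (1-u) ^ (-α)) volume c 1 := by
      have H := (intervalIntegrable_rpow' (by linarith : (-1:ℝ) < -α)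
        (a := 1-c) (b := 0)).comp_sub_left 1
      norm_num at H
      exact H
    apply hint.continuousOn_mul
    apply ContinuousOn.rpow_const continuousOn_id
    intro u hu
    left
    rw [uIcc_of_le hc1.le] at hu
    have : c ≤ u := hu.1
    intro hcon
    simp only [id_eq] at hcon
    nlinarith
  have hsplit : (∫ u in Ioo (0:ℝ) c, h u) + (∫ u in Ioo c 1, h u)
      = ∫ u in (0:ℝ)..1, h u := by
    rw [← intervalIntegral.integral_add_adjacent_intervals hi1 hi2,
      intervalIntegral.integral_of_le hc0.le, intervalIntegral.integral_of_le hc1.le,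
      MeasureTheory.integral_Ioc_eq_integral_Ioo, MeasureTheory.integral_Ioc_eq_integral_Ioo]
  have hsin : 0 < Real.sin (Real.pi * α) :=
    Real.sin_pos_of_pos_of_lt_pi (by positivity)
      (mul_lt_of_lt_one_right Real.pi_pos hα1)
  rw [key1, key2, ← mul_add, hsplit, hh, beta_eval' hα0 hα1, mul_comm α Real.pi]
  field_simp
end

section
/- For any real x > 0 and α ∈ (0,1) ∪ (1,2), x^(1-α) = 1 + (sin(απ)/π) · ∫₀¹ (x-1)/(t(x-1)+1) · t^(α-1) (1-t)^(1-α) dt. -/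
open MeasureTheory Real Set intervalIntegral

lemma beta_aux (α : ℝ) (hα : α ∈ Set.Ioo (0:ℝ) 1) :
    IntegrableOn (fun t : ℝ => t^(α-1) * (1-t)^(-α)) (Set.Ioo 0 1) volume ∧
    ∫ t in Set.Ioo (0:ℝ) 1, t^(α-1) * (1-t)^(-α) = π / Real.sin (π * α) := by
  obtain ⟨h0, h1⟩ := hα
  have hre : (0:ℝ) < (α:ℂ).re := by simpa using h0
  have hre' : (0:ℝ) < ((1:ℂ) - α).re := by simp; linarith
  have hc : IntervalIntegrable (fun t : ℝ => (t:ℂ)^((α:ℂ)-1) * ((1:ℂ)-(t:ℂ))^(((1:ℂ)-(α:ℂ))-1))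
      volume 0 1 := Complex.betaIntegral_convergent hre hre'
  have heq : ∀ t ∈ Set.Ioc (0:ℝ) 1,
      (t:ℂ)^((α:ℂ)-1) * ((1:ℂ)-(t:ℂ))^(((1:ℂ)-(α:ℂ))-1)
        = ((t^(α-1) * (1-t)^(-α) : ℝ) : ℂ) := by
    intro t ht
    rw [Complex.ofReal_mul, Complex.ofReal_cpow ht.1.le, Complex.ofReal_cpow (by linarith [ht.2])]
    push_cast
    ring_nf
  have hval : Complex.betaIntegral α (1-α) = ((π / Real.sin (π * α) : ℝ) : ℂ) := by
    have := Complex.Gamma_mul_Gamma_eq_betaIntegral hre hre'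
    rw [show (α:ℂ) + (1 - α) = 1 by ring, Complex.Gamma_one, one_mul] at this
    rw [← this, Complex.Gamma_mul_Gamma_one_sub]
    push_cast [Complex.ofReal_sin]
    norm_num
  have hint : ∫ t in (0:ℝ)..1, (t:ℂ)^((α:ℂ)-1) * ((1:ℂ)-(t:ℂ))^(((1:ℂ)-(α:ℂ))-1)
      = Complex.betaIntegral α (1-α) := rfl
  have hio : IntegrableOn (fun t : ℝ => (t:ℂ)^((α:ℂ)-1) * ((1:ℂ)-(t:ℂ))^(((1:ℂ)-(α:ℂ))-1))
      (Set.Ioc 0 1) volume := by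
    rw [← intervalIntegrable_iff_integrableOn_Ioc_of_le zero_le_one]; exact hc
  constructor
  · have : IntegrableOn (fun t : ℝ => ((t^(α-1) * (1-t)^(-α) : ℝ) : ℂ)) (Set.Ioc 0 1) volume :=
      hio.congr_fun heq measurableSet_Ioc
    have h4 : IntegrableOn (fun x : ℝ => Complex.re ((x ^ (α - 1) * (1 - x) ^ (-α) : ℝ) : ℂ))
        (Set.Ioc 0 1) volume := this.re
    simpa using h4.mono_set Set.Ioo_subset_Ioc_self
  · have h2 : ∫ t in (0:ℝ)..1, ((t^(α-1) * (1-t)^(-α) : ℝ) : ℂ)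
        = ((π / Real.sin (π * α) : ℝ) : ℂ) := by
      rw [← hval, ← hint]
      apply intervalIntegral.integral_congr_ae
      rw [Set.uIoc_of_le zero_le_one]
      filter_upwards [] with t
      intro ht
      exact (heq t ht).symm
    rw [intervalIntegral.integral_ofReal] at h2
    have h3 := Complex.ofReal_injective h2
    rw [intervalIntegral.integral_of_le zero_le_one, integral_Ioc_eq_integral_Ioo] at h3
    exact h3

lemma cov_aux (x α : ℝ) (hx : 0 < x) :
    ∫ t in Set.Ioo (0:ℝ) 1, (t^(α-1) * (1-t)^(-α)) / (t*(x-1)+1)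
      = x^(-α) * ∫ t in Set.Ioo (0:ℝ) 1, t^(α-1) * (1-t)^(-α) := by
  set D : ℝ → ℝ := fun t => t*(x-1)+1 with hDdef
  have hD : ∀ t ∈ Set.Ioo (0:ℝ) 1, 0 < D t := by
    intro t ht
    have : D t = t*x + (1-t) := by simp [hDdef]; ring
    rw [this]
    nlinarith [mul_pos ht.1 hx, ht.2]
  set φ : ℝ → ℝ := fun t => x*t/(D t) with hφdef
  have hderiv : ∀ t ∈ Set.Ioo (0:ℝ) 1,
      HasDerivWithinAt φ (x/(D t)^2) (Set.Ioo 0 1) t := by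
    intro t ht
    have hDt := hD t ht
    have h1 : HasDerivAt (fun t : ℝ => x*t) x t := by
      simpa using (hasDerivAt_id t).const_mul x
    have h2 : HasDerivAt D (x-1) t := by
      rw [hDdef]; simpa using ((hasDerivAt_id t).mul_const (x-1)).add_const 1
    have h3 := h1.div h2 hDt.ne'
    have : (x * D t - x*t*(x-1))/(D t)^2 = x/(D t)^2 := by
      have : x * D t - x*t*(x-1) = x := by simp only [hDdef]; ring
      rw [this]
    rw [this] at h3
    exact h3.hasDerivWithinAt
  have hinj : Set.InjOn φ (Set.Ioo 0 1) := by
    intro a ha b hb h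
    have hDa := hD a ha; have hDb := hD b hb
    rw [hφdef] at h
    simp only at h
    rw [div_eq_div_iff hDa.ne' hDb.ne'] at h
    have h2 : x*a = x*b := by simp only [hDdef] at h; nlinarith [h]
    exact mul_left_cancel₀ hx.ne' h2
  have himg : φ '' Set.Ioo 0 1 = Set.Ioo 0 1 := by
    ext u
    constructor
    · rintro ⟨t, ht, rfl⟩
      have hDt := hD t ht
      constructor
      · exact div_pos (mul_pos hx ht.1) hDt
      · rw [div_lt_one hDt]
        simp only [hDdef]
        nlinarith [ht.1, ht.2]
    · intro hu
      have hden : 0 < x*(1-u) + u := by nlinarith [hu.1, hu.2]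
      refine ⟨u/(x*(1-u)+u), ⟨div_pos hu.1 hden, ?_⟩, ?_⟩
      · rw [div_lt_one hden]; nlinarith [hu.1, hu.2]
      · simp only [hφdef, hDdef]
        have hstep : u/(x*(1-u)+u) * (x-1) + 1 = x/(x*(1-u)+u) := by
          field_simp; ring
        rw [hstep]
        field_simp
  have key := integral_image_eq_integral_abs_deriv_smul measurableSet_Ioo hderiv hinj
    (fun u => u^(α-1) * (1-u)^(-α))
  rw [himg] at key
  have hcong : ∫ t in Set.Ioo (0:ℝ) 1, |x/(D t)^2| • ((φ t)^(α-1) * (1-φ t)^(-α))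
      = ∫ t in Set.Ioo (0:ℝ) 1, x^α * ((t^(α-1) * (1-t)^(-α)) / (t*(x-1)+1)) := by
    apply setIntegral_congr_fun measurableSet_Ioo
    intro t ht
    have hDt := hD t ht
    have ht0 := ht.1; have ht1 := ht.2
    have hφ1 : 1 - φ t = (1-t)/(D t) := by
      rw [hφdef]; field_simp; simp [hDdef]; ring
    have hφ0 : φ t = x*t/(D t) := rfl
    simp only [smul_eq_mul]
    rw [abs_of_pos (by positivity), hφ1, hφ0,
      Real.div_rpow (by positivity) hDt.le, Real.div_rpow (by linarith) hDt.le,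
      Real.mul_rpow hx.le ht0.le]
    have e1 : x ^ (α-1) * x = x ^ α := by
      rw [show x ^ (α-1) * x = x ^ (α-1) * x ^ (1:ℝ) by rw [Real.rpow_one],
        ← Real.rpow_add hx]
      norm_num
    have e2 : (D t)^(α-1) * (D t)^(-α) * D t = 1 := by
      rw [← Real.rpow_add hDt, show α-1 + -α = (-1:ℝ) by ring, Real.rpow_neg_one]
      exact inv_mul_cancel₀ hDt.ne'
    have e3 : (0:ℝ) < (D t)^(α-1) := Real.rpow_pos_of_pos hDt _
    have e4 : (0:ℝ) < (D t)^(-α) := Real.rpow_pos_of_pos hDt _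
    have hDt' : t*(x-1)+1 = D t := rfl
    rw [hDt', ← e1]
    field_simp
    linear_combination -e2
  rw [hcong, MeasureTheory.integral_const_mul] at key
  have hxa : x^(-α) * x^α = 1 := by
    rw [← Real.rpow_add hx]; norm_num
  rw [key, ← mul_assoc, hxa, one_mul]

lemma key_aux (x α : ℝ) (hx : 0 < x) (hα : α ∈ Set.Ioo (0:ℝ) 1) :
    ∫ t in (0:ℝ)..1, (x - 1) / (t * (x - 1) + 1) * (t ^ (α - 1) * (1 - t) ^ (1 - α))
      = (x ^ (1-α) - 1) * (π / Real.sin (α * π)) := by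
  obtain ⟨hgint, hgval⟩ := beta_aux α hα
  have hD : ∀ t ∈ Set.Ioo (0:ℝ) 1, 0 < t*(x-1)+1 := by
    intro t ht
    have : t*(x-1)+1 = t*x + (1-t) := by ring
    rw [this]
    nlinarith [mul_pos ht.1 hx, ht.2]
  have hmin : (0:ℝ) < min x 1 := lt_min hx one_pos
  have hmeas : Measurable (fun t : ℝ => (t^(α-1) * (1-t)^(-α)) / (t*(x-1)+1)) := by
    fun_prop
  have hint2 : IntegrableOn (fun t : ℝ => (t^(α-1) * (1-t)^(-α)) / (t*(x-1)+1))
      (Set.Ioo 0 1) volume := by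
    apply Integrable.mono' (hgint.const_mul (min x 1)⁻¹) hmeas.aestronglyMeasurable
    rw [ae_restrict_iff' measurableSet_Ioo]
    filter_upwards [] with t ht
    have hDt := hD t ht
    have hg0 : 0 ≤ t^(α-1) * (1-t)^(-α) :=
      mul_nonneg (Real.rpow_nonneg ht.1.le _) (Real.rpow_nonneg (by linarith [ht.2]) _)
    rw [Real.norm_eq_abs, abs_of_nonneg (div_nonneg hg0 hDt.le)]
    rw [inv_mul_eq_div]
    apply div_le_div_of_nonneg_left hg0 hmin
    have : min x 1 ≤ t*x + (1-t) := by
      rcases min_le_iff.mpr (Or.inl (le_refl x)) with _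
      have hxm : min x 1 ≤ x := min_le_left _ _
      have h1m : min x 1 ≤ 1 := min_le_right _ _
      nlinarith [ht.1, ht.2]
    calc min x 1 ≤ t*x + (1-t) := this
      _ = t*(x-1)+1 := by ring
  have hpt : ∀ t ∈ Set.Ioo (0:ℝ) 1,
      (x - 1) / (t * (x - 1) + 1) * (t ^ (α - 1) * (1 - t) ^ (1 - α))
      = x * ((t^(α-1) * (1-t)^(-α)) / (t*(x-1)+1)) - t^(α-1) * (1-t)^(-α) := by
    intro t ht
    have hDt := hD t ht
    have h1t : (0:ℝ) < 1 - t := by linarith [ht.2]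
    have hp : (1-t)^(1-α) = (1-t)^(-α) * (1-t) := by
      rw [show (1:ℝ)-α = -α + 1 by ring, Real.rpow_add h1t, Real.rpow_one]
    rw [hp]
    field_simp
    rw [div_sub_one (ne_of_gt (by linarith))]
    ring
  rw [intervalIntegral.integral_of_le zero_le_one, integral_Ioc_eq_integral_Ioo,
    setIntegral_congr_fun measurableSet_Ioo hpt,
    integral_sub (hint2.const_mul x) hgint, MeasureTheory.integral_const_mul, cov_aux x α hx, hgval]
  have hx1 : x * x^(-α) = x^(1-α) := by
    rw [show (1:ℝ)-α = 1 + -α by ring, Real.rpow_add hx, Real.rpow_one]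
  rw [← mul_assoc, hx1, mul_comm π α]
  ring

/-- For any real `x > 0` and `α ∈ (0,1) ∪ (1,2)`,
`x^(1-α) = 1 + (sin(απ)/π) · ∫₀¹ (x-1)/(t(x-1)+1) · t^(α-1) (1-t)^(1-α) dt`. -/
theorem stmt1 (x α : ℝ) (hx : 0 < x)
    (hα : α ∈ Set.Ioo (0 : ℝ) 1 ∪ Set.Ioo (1 : ℝ) 2) :
    x ^ (1 - α) = 1 + Real.sin (α * Real.pi) / Real.pi *
      ∫ t in (0:ℝ)..1, (x - 1) / (t * (x - 1) + 1) * (t ^ (α - 1) * (1 - t) ^ (1 - α)) := by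
  have hπ : (0:ℝ) < π := Real.pi_pos
  have main : ∫ t in (0:ℝ)..1, (x - 1) / (t * (x - 1) + 1) * (t ^ (α - 1) * (1 - t) ^ (1 - α))
      = (x ^ (1-α) - 1) * (π / Real.sin (α * π)) := by
    rcases hα with h | h
    · exact key_aux x α hx h
    · set α' : ℝ := 2 - α with hα'def
      have hα' : α' ∈ Set.Ioo (0:ℝ) 1 := ⟨by simp only [hα'def]; linarith [h.2],
        by simp only [hα'def]; linarith [h.1]⟩
      have hx' : 0 < x⁻¹ := inv_pos.mpr hx
      have hptwise : ∀ t : ℝ,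
          (x - 1) / ((1-t) * (x - 1) + 1) * ((1-t) ^ (α - 1) * t ^ (1 - α))
          = -((x⁻¹ - 1) / (t * (x⁻¹ - 1) + 1) * (t ^ (α' - 1) * (1 - t) ^ (1 - α'))) := by
        intro t
        have hpow : (1-t) ^ (α - 1) * t ^ (1 - α)
            = t ^ (α' - 1) * (1 - t) ^ (1 - α') := by
          rw [show α' - 1 = 1 - α by simp only [hα'def]; ring,
            show 1 - α' = α - 1 by simp only [hα'def]; ring]
          ring_nf
        rw [hpow]
        have hrat : (x - 1) / ((1-t) * (x - 1) + 1) = -((x⁻¹ - 1) / (t * (x⁻¹ - 1) + 1)) := by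
          have e1 : t * (x⁻¹ - 1) + 1 = ((1-t)*(x-1) + 1) / x := by
            field_simp; ring
          rw [e1, div_div_eq_mul_div, show (x⁻¹ - 1)*x = 1 - x by field_simp,
            ← neg_div, neg_sub]
        rw [hrat]; ring
      have hcomp := intervalIntegral.integral_comp_sub_left (a := 0) (b := 1)
        (fun t => (x - 1) / (t * (x - 1) + 1) * (t ^ (α - 1) * (1 - t) ^ (1 - α))) 1
      norm_num at hcomp
      have hswap : (∫ t in (0:ℝ)..1, (x - 1) / (t * (x - 1) + 1) * (t ^ (α - 1) * (1 - t) ^ (1 - α)))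
          = ∫ t in (0:ℝ)..1, -((x⁻¹ - 1) / (t * (x⁻¹ - 1) + 1) * (t ^ (α' - 1) * (1 - t) ^ (1 - α'))) := by
        rw [← hcomp]
        apply intervalIntegral.integral_congr
        intro t _
        simpa using hptwise t
      rw [hswap, intervalIntegral.integral_neg, key_aux x⁻¹ α' hx' hα']
      have hxr : (x⁻¹) ^ ((1:ℝ) - α') = x ^ (1 - α) := by
        rw [Real.inv_rpow hx.le, ← Real.rpow_neg hx.le]
        congr 1
        simp only [hα'def]; ring
      have hsin : Real.sin (α' * π) = -Real.sin (α * π) := by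
        rw [show α' * π = 2*π - α*π by simp only [hα'def]; ring]
        rw [Real.sin_sub, Real.sin_two_pi, Real.cos_two_pi]
        ring
      rw [hxr, hsin, div_neg]
      ring
  rw [main]
  have hs : Real.sin (α * π) ≠ 0 := by
    rcases hα with h | h
    · exact (Real.sin_pos_of_pos_of_lt_pi (mul_pos h.1 hπ)
        (by nlinarith [h.2, hπ])).ne'
    · have h1 : Real.sin (α * π) = -Real.sin ((2 - α) * π) := by
        rw [show α * π = 2*π - (2-α)*π by ring, Real.sin_sub, Real.sin_two_pi, Real.cos_two_pi]
        ring
      have h2 : 0 < Real.sin ((2-α) * π) := Real.sin_pos_of_pos_of_lt_pi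
        (by nlinarith [h.2, hπ]) (by nlinarith [h.1, hπ])
      rw [h1]
      exact neg_ne_zero.mpr h2.ne'
  field_simp
  ring
end

section
/- Let ρ and σ be positive semi-definite operators on a finite-dimensional Hilbert space with spectral decompositions ρ = Σ_k q_k |φ_k⟩⟨φ_k| and σ = Σ_j p_j |ψ_j⟩⟨ψ_j|. For every t ∈ (0,1], Σ_{j,k} (q_k · p_j)/(q_k + p_j·t) · |⟨ψ_j|φ_k⟩|² = (1/t) · inf_Z ( Tr[ρ Z†Z] + t · Tr[σ (𝟙+Z)(𝟙+Z†)] ), where the infimum is over all linear operators Z on the Hilbert space. -/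
open Matrix

/-!
Write `ρ = A diag(q) Aᴴ` and `σ = B diag(p) Bᴴ` with unitaries `A`, `B` whose columns are the
eigenvectors, and substitute `Y = Bᴴ Z A`, a bijection of the matrix space. With `C = Bᴴ A`, whose
entries are the overlaps `⟨ψ_j, φ_k⟩`, the functional (with `t σ` in place of `σ`) becomes
`∑_{j,k} q_k |Y_jk|² + t p_j |C_jk + Y_jk|²`, in which the entries of `Y` decouple. Each entry is
minimised separately: `min_z a|z|² + b|c + z|² = ab/(a+b) |c|²`, attained at `z = -b c/(a+b)`.
-/

theorem Complex.isLeast_mul_normSq_add_mul_normSq_add {a b : ℝ} (ha : 0 ≤ a) (hb : 0 ≤ b)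
    (c : ℂ) :
    IsLeast (Set.range fun z : ℂ => a * normSq z + b * normSq (c + z))
      (a * b / (a + b) * normSq c) := by
  rcases (add_nonneg ha hb).eq_or_lt with hab | hab
  · obtain ⟨rfl, rfl⟩ : a = 0 ∧ b = 0 := ⟨by linarith, by linarith⟩
    exact ⟨⟨0, by simp⟩, by rintro _ ⟨z, rfl⟩; simp⟩
  constructor
  · refine ⟨-((b / (a + b) : ℝ) : ℂ) * c, ?_⟩
    have hweights : (1 : ℂ) - (b / (a + b) : ℝ) = (a / (a + b) : ℝ) := by
      rw [← ofReal_one, ← ofReal_sub]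
      congr 1
      field_simp
      ring
    have hshift : c + -((b / (a + b) : ℝ) : ℂ) * c = ((a / (a + b) : ℝ) : ℂ) * c := by
      linear_combination c * hweights
    simp only [hshift, normSq_mul, normSq_neg, normSq_ofReal]
    field_simp
    ring
  · rintro _ ⟨z, rfl⟩
    -- `(a + b) (a|z|² + b|c + z|²) - ab|c|² = |a z + b (c + z)|²`
    have hsq := normSq_nonneg (a * z + b * (c + z))
    rw [div_mul_eq_mul_div, div_le_iff₀ hab]
    simp only [normSq_apply, add_re, add_im, mul_re, mul_im, ofReal_re, ofReal_im] at hsq ⊢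
    nlinarith

theorem isLeast_range_sum_pi {ι α M : Type*} [Fintype ι] [AddCommMonoid M] [PartialOrder M]
    [IsOrderedAddMonoid M] {f : ι → α → M} {m : ι → M} (h : ∀ i, IsLeast (Set.range (f i)) (m i)) :
    IsLeast (Set.range fun x : ι → α => ∑ i, f i (x i)) (∑ i, m i) := by
  choose x hx using fun i => (h i).1
  refine ⟨⟨x, Finset.sum_congr rfl fun i _ => hx i⟩, ?_⟩
  rintro _ ⟨y, rfl⟩
  exact Finset.sum_le_sum fun i _ => (h i).2 ⟨y i, rfl⟩

namespace Matrix

theorem sum_smul_vecMulVec_star_eq {m n R : Type*} [Fintype m] [DecidableEq m] [CommSemiring R]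
    [StarRing R] (d : m → R) (v : m → n → R) :
    ∑ k, d k • vecMulVec (v k) (star (v k)) = (of v)ᵀ * diagonal d * (of v)ᵀᴴ := by
  ext i i'
  rw [mul_apply]
  simp only [mul_diagonal, Matrix.sum_apply, smul_apply, vecMulVec_apply, smul_eq_mul,
    transpose_apply, of_apply, conjTranspose_apply, Pi.star_apply]
  exact Finset.sum_congr rfl fun k _ => by ring

theorem of_transpose_mem_unitaryGroup {n : Type*} [Fintype n] [DecidableEq n] {v : n → n → ℂ}
    (hv : ∀ k l, star (v k) ⬝ᵥ v l = if k = l then 1 else 0) :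
    (of v)ᵀ ∈ unitaryGroup n ℂ := by
  rw [mem_unitaryGroup_iff']
  ext k l
  simpa [mul_apply, dotProduct, one_apply] using hv k l

theorem re_trace_diagonal_mul_conjTranspose_mul_self {m n : Type*} [Fintype m] [Fintype n]
    [DecidableEq n] (d : n → ℝ) (Y : Matrix m n ℂ) :
    (trace (diagonal (fun k => (d k : ℂ)) * (Yᴴ * Y))).re =
      ∑ k, d k * ∑ j, Complex.normSq (Y j k) := by
  simp only [trace, diag, diagonal_mul]
  simp [mul_apply, Finset.mul_sum, Complex.normSq_apply]

theorem re_trace_diagonal_mul_mul_conjTranspose_self {m n : Type*} [Fintype m] [Fintype n]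
    [DecidableEq m] (d : m → ℝ) (Y : Matrix m n ℂ) :
    (trace (diagonal (fun j => (d j : ℂ)) * (Y * Yᴴ))).re =
      ∑ j, d j * ∑ k, Complex.normSq (Y j k) := by
  simpa using re_trace_diagonal_mul_conjTranspose_mul_self d Yᴴ

theorem trace_mul_mul_conjTranspose_mul {m n R : Type*} [Fintype m] [Fintype n] [CommSemiring R]
    [StarRing R] (A : Matrix m n R) (D : Matrix n n R) (X : Matrix m m R) :
    trace (A * D * Aᴴ * X) = trace (D * (Aᴴ * X * A)) := by
  simp only [Matrix.mul_assoc]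
  rw [trace_mul_comm]
  simp only [Matrix.mul_assoc]

theorem isLeast_re_trace_variational {n : Type*} [Fintype n] [DecidableEq n] {A B : Matrix n n ℂ}
    (hA : A ∈ unitaryGroup n ℂ) (hB : B ∈ unitaryGroup n ℂ) {q p : n → ℝ} (hq : ∀ k, 0 ≤ q k)
    (hp : ∀ j, 0 ≤ p j) :
    IsLeast (Set.range fun Z : Matrix n n ℂ =>
        (trace (A * diagonal (fun k => (q k : ℂ)) * Aᴴ * (Zᴴ * Z))).re +
          (trace (B * diagonal (fun j => (p j : ℂ)) * Bᴴ * ((1 + Z) * (1 + Z)ᴴ))).re)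
      (∑ j, ∑ k, q k * p j / (q k + p j) * Complex.normSq ((Bᴴ * A) j k)) := by
  have hAA : A * Aᴴ = 1 := Unitary.mul_star_self_of_mem hA
  have hBB : B * Bᴴ = 1 := Unitary.mul_star_self_of_mem hB
  have hAA' : Aᴴ * A = 1 := Unitary.star_mul_self_of_mem hA
  have hBB' : Bᴴ * B = 1 := Unitary.star_mul_self_of_mem hB
  set C := Bᴴ * A
  set F : Matrix n n ℂ → ℝ := fun Y =>
    ∑ j, ∑ k, (q k * Complex.normSq (Y j k) + p j * Complex.normSq (C j k + Y j k))
  have hobj : ∀ Z : Matrix n n ℂ,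
      (trace (A * diagonal (fun k => (q k : ℂ)) * Aᴴ * (Zᴴ * Z))).re +
          (trace (B * diagonal (fun j => (p j : ℂ)) * Bᴴ * ((1 + Z) * (1 + Z)ᴴ))).re =
        F (Bᴴ * Z * A) := by
    intro Z
    have hρ : Aᴴ * (Zᴴ * Z) * A = (Bᴴ * Z * A)ᴴ * (Bᴴ * Z * A) := by
      simp only [conjTranspose_mul, conjTranspose_conjTranspose, Matrix.mul_assoc]
      rw [← Matrix.mul_assoc B, hBB, Matrix.one_mul]
    have hσ : Bᴴ * ((1 + Z) * (1 + Z)ᴴ) * B = (C + Bᴴ * Z * A) * (C + Bᴴ * Z * A)ᴴ := by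
      have : C + Bᴴ * Z * A = Bᴴ * (1 + Z) * A := by
        rw [Matrix.mul_add, Matrix.add_mul, Matrix.mul_one]
      rw [this]
      simp only [conjTranspose_mul, conjTranspose_conjTranspose, Matrix.mul_assoc]
      rw [← Matrix.mul_assoc A, hAA, Matrix.one_mul]
    rw [trace_mul_mul_conjTranspose_mul, trace_mul_mul_conjTranspose_mul, hρ, hσ,
      re_trace_diagonal_mul_conjTranspose_mul_self, re_trace_diagonal_mul_mul_conjTranspose_self]
    simp only [Finset.mul_sum, add_apply]
    rw [Finset.sum_comm]
    simp only [F, Finset.sum_add_distrib]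
  have hsurj : Function.Surjective fun Z : Matrix n n ℂ => Bᴴ * Z * A := fun Y =>
    ⟨B * Y * Aᴴ, by
      simp only [← Matrix.mul_assoc, hBB', Matrix.one_mul, Matrix.mul_assoc Y, hAA', Matrix.mul_one]⟩
  rw [funext hobj, show (fun Z => F (Bᴴ * Z * A)) = F ∘ fun Z => Bᴴ * Z * A from rfl,
    hsurj.range_comp]
  exact isLeast_range_sum_pi fun j => isLeast_range_sum_pi fun k =>
    Complex.isLeast_mul_normSq_add_mul_normSq_add (hq k) (hp j) (C j k)

end Matrix

/-- **Pusz–Woronowicz-type variational formula.** Let `ρ = Σ_k q_k |φ_k⟩⟨φ_k|` and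
`σ = Σ_j p_j |ψ_j⟩⟨ψ_j|` be positive semi-definite operators on a finite-dimensional Hilbert
space (given via spectral decompositions with orthonormal eigenbases and nonnegative
eigenvalues).  For every `t ∈ (0,1]`,
`Σ_{j,k} (q_k p_j)/(q_k + p_j t) |⟨ψ_j|φ_k⟩|²
  = (1/t) · inf_Z ( Tr[ρ Z†Z] + t·Tr[σ (𝟙+Z)(𝟙+Z†)] )`,
the infimum ranging over all linear operators `Z`.  (Terms with `q_k = 0` or `p_j = 0`
vanish, matching Lean's convention `x/0 = 0`.) -/
theorem stmt3 {n : ℕ} (q p : Fin n → ℝ) (hq : ∀ k, 0 ≤ q k) (hp : ∀ j, 0 ≤ p j)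
    (φ ψ : Fin n → (Fin n → ℂ))
    (hφ : ∀ k l, star (φ k) ⬝ᵥ φ l = if k = l then 1 else 0)
    (hψ : ∀ k l, star (ψ k) ⬝ᵥ ψ l = if k = l then 1 else 0)
    (ρ σ : Matrix (Fin n) (Fin n) ℂ)
    (hρ : ρ = ∑ k, (q k : ℂ) • vecMulVec (φ k) (star (φ k)))
    (hσ : σ = ∑ j, (p j : ℂ) • vecMulVec (ψ j) (star (ψ j)))
    (t : ℝ) (ht : t ∈ Set.Ioc (0 : ℝ) 1) :
    ∑ j, ∑ k, (q k * p j) / (q k + p j * t) * ‖star (ψ j) ⬝ᵥ φ k‖ ^ 2 =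
      (1 / t) * ⨅ Z : Matrix (Fin n) (Fin n) ℂ,
        ((trace (ρ * (Zᴴ * Z))).re +
          t * (trace (σ * ((1 + Z) * (1 + Zᴴ)))).re) := by
  have ht0 : t ≠ 0 := ht.1.ne'
  have hρ' : ρ = (of φ)ᵀ * diagonal (fun k => (q k : ℂ)) * (of φ)ᵀᴴ := by
    rw [hρ, sum_smul_vecMulVec_star_eq]
  have htσ : (t : ℂ) • σ = (of ψ)ᵀ * diagonal (fun j => ((p j * t : ℝ) : ℂ)) * (of ψ)ᵀᴴ := by
    rw [hσ, Finset.smul_sum, ← sum_smul_vecMulVec_star_eq]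
    simp only [smul_smul, Complex.ofReal_mul, mul_comm]
  have hobj : ∀ Z : Matrix (Fin n) (Fin n) ℂ,
      (trace (ρ * (Zᴴ * Z))).re + t * (trace (σ * ((1 + Z) * (1 + Zᴴ)))).re =
        (trace ((of φ)ᵀ * diagonal (fun k => (q k : ℂ)) * (of φ)ᵀᴴ * (Zᴴ * Z))).re +
          (trace ((of ψ)ᵀ * diagonal (fun j => ((p j * t : ℝ) : ℂ)) * (of ψ)ᵀᴴ *
            ((1 + Z) * (1 + Z)ᴴ))).re := by
    intro Z
    rw [← hρ', ← htσ, Matrix.smul_mul, trace_smul, smul_eq_mul, Complex.re_ofReal_mul,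
      conjTranspose_add, conjTranspose_one]
  have hleast := isLeast_re_trace_variational (of_transpose_mem_unitaryGroup hφ)
    (of_transpose_mem_unitaryGroup hψ) hq fun j => mul_nonneg (hp j) ht.1.le
  rw [funext hobj, hleast.isGLB.ciInf_eq, Finset.mul_sum]
  refine Finset.sum_congr rfl fun j _ => ?_
  rw [Finset.mul_sum]
  refine Finset.sum_congr rfl fun k _ => ?_
  have hentry : ((of ψ)ᵀᴴ * (of φ)ᵀ) j k = star (ψ j) ⬝ᵥ φ k := by
    simp [mul_apply, dotProduct]
  rw [hentry, Complex.sq_norm]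
  field_simp
end

section
/- Let ρ, σ be positive semi-definite operators on a finite-dimensional Hilbert space with ker(σ) ⊆ ker(ρ) (ρ ≪ σ). Then Tr[ρ² σ⁻¹] = − inf_Z ( Tr[ρ (Z† + Z)] + Tr[σ Z Z†] ), where σ⁻¹ denotes the Moore–Penrose pseudo-inverse and the infimum is over all linear operators Z. -/
open Matrix
open scoped ComplexOrder

/-- The Moore–Penrose pseudo-inverse of a positive semi-definite matrix, obtained by applying
the real function `x ↦ x⁻¹` (with `0⁻¹ = 0`) via the continuous functional calculus. -/
noncomputable def matPinv {n : ℕ} (A : Matrix (Fin n) (Fin n) ℂ) : Matrix (Fin n) (Fin n) ℂ :=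
  cfc (fun x : ℝ => x⁻¹) A

private lemma psd_trace_re_nonneg' {n : ℕ} {A : Matrix (Fin n) (Fin n) ℂ}
    (hA : A.PosSemidef) : 0 ≤ (trace A).re := by
  have h : ∀ i, 0 ≤ (A i i).re := by
    intro i
    have := (posSemidef_iff_dotProduct_mulVec.mp hA).2 (Pi.single i 1)
    have h2 := (Complex.le_def.mp this).1
    simpa [mulVec_single, dotProduct, Pi.single_apply, Finset.sum_ite_eq] using h2
  have h0 : (trace A).re = ∑ i, (A i i).re := by
    simp [Matrix.trace, Matrix.diag, Complex.re_sum]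
  rw [h0]
  exact Finset.sum_nonneg fun i _ => h i

private lemma mat_eq_zero_of_mulVec_eq_zero' {n : ℕ} {M : Matrix (Fin n) (Fin n) ℂ}
    (h : ∀ v, M *ᵥ v = 0) : M = 0 := by
  ext i j
  have := congrFun (h (Pi.single j 1)) i
  simpa [mulVec_single] using this

/-- Let `ρ, σ` be positive semi-definite operators on a finite-dimensional Hilbert space with
`ker σ ⊆ ker ρ` (`ρ ≪ σ`).  Then `Tr[ρ² σ⁻¹] = − inf_Z ( Tr[ρ(Z† + Z)] + Tr[σ Z Z†] )`,
where `σ⁻¹` is the Moore–Penrose pseudo-inverse and the infimum is over all operators `Z`. -/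
theorem stmt6 {n : ℕ} (ρ σ : Matrix (Fin n) (Fin n) ℂ)
    (hρ : ρ.PosSemidef) (hσ : σ.PosSemidef)
    (hdom : ∀ v : Fin n → ℂ, σ.mulVec v = 0 → ρ.mulVec v = 0) :
    (trace (ρ * ρ * matPinv σ)).re =
      - ⨅ Z : Matrix (Fin n) (Fin n) ℂ,
          ((trace (ρ * (Zᴴ + Z))).re + (trace (σ * (Z * Zᴴ))).re) := by
  classical
  have hσh : σ.IsHermitian := hσ.1
  set U : Matrix (Fin n) (Fin n) ℂ := (hσh.eigenvectorUnitary : Matrix (Fin n) (Fin n) ℂ) with hU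
  have hUU : star U * U = 1 := (Matrix.mem_unitaryGroup_iff').mp hσh.eigenvectorUnitary.2
  set E : Fin n → ℝ := hσh.eigenvalues with hE
  set M : (ℝ → ℝ) → Matrix (Fin n) (Fin n) ℂ :=
    fun f => U * diagonal (RCLike.ofReal ∘ f ∘ E) * star U with hM
  have key : ∀ f g : ℝ → ℝ, M f * M g = M (fun x => f x * g x) := by
    intro f g
    have hdd : diagonal (RCLike.ofReal ∘ f ∘ E : Fin n → ℂ) * diagonal (RCLike.ofReal ∘ g ∘ E)
        = diagonal (RCLike.ofReal ∘ (fun x => f x * g x) ∘ E) := by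
      rw [diagonal_mul_diagonal]
      exact congrArg diagonal (funext fun i => by
        simp [Function.comp, Complex.ofReal_mul])
    calc M f * M g
        = U * diagonal (RCLike.ofReal ∘ f ∘ E) * (star U * U) *
            (diagonal (RCLike.ofReal ∘ g ∘ E) * star U) := by
          simp only [hM, mul_assoc]
      _ = M (fun x => f x * g x) := by
          rw [hUU]
          simp only [hM]
          rw [← hdd]
          simp only [mul_one, mul_assoc]
  have hσ_eq : σ = M (fun x : ℝ => x) := by
    exact hσh.spectral_theorem
  set T : Matrix (Fin n) (Fin n) ℂ := matPinv σ with hTdef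
  have hT_eq : T = M (fun x : ℝ => x⁻¹) := by
    rw [hTdef, matPinv, hσh.cfc_eq]
    rfl
  have hcomm : σ * T = T * σ := by
    rw [hσ_eq, hT_eq, key, key]
    exact congrArg M (funext fun x => mul_comm x x⁻¹)
  have hστσ : σ * T * σ = σ := by
    conv_lhs => rw [hσ_eq, hT_eq, key, key]
    conv_rhs => rw [hσ_eq]
    refine congrArg M (funext fun x => ?_)
    rcases eq_or_ne x 0 with h | h
    · simp [h]
    · field_simp
  have hTherm : Tᴴ = T := by
    have hD : (diagonal (RCLike.ofReal ∘ (fun x : ℝ => x⁻¹) ∘ E) : Matrix (Fin n) (Fin n) ℂ)ᴴ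
        = diagonal (RCLike.ofReal ∘ (fun x : ℝ => x⁻¹) ∘ E) := by
      rw [diagonal_conjTranspose]
      exact congrArg diagonal (funext fun i => by
        simp [Function.comp, Pi.star_apply, Complex.conj_ofReal])
    rw [hT_eq]
    simp only [hM]
    rw [conjTranspose_mul, conjTranspose_mul, hD, star_eq_conjTranspose,
      conjTranspose_conjTranspose, mul_assoc]
  have hρστ : ρ * (σ * T) = ρ := by
    have hσσT : σ * (σ * T) = σ := by
      calc σ * (σ * T) = σ * (T * σ) := by rw [hcomm]
        _ = σ * T * σ := (mul_assoc σ T σ).symm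
        _ = σ := hστσ
    have h0 : ρ * (1 - σ * T) = 0 := by
      apply mat_eq_zero_of_mulVec_eq_zero'
      intro v
      rw [← mulVec_mulVec]
      apply hdom
      rw [mulVec_mulVec]
      have hz : σ * (1 - σ * T) = 0 := by
        rw [mul_sub, mul_one, hσσT, sub_self]
      rw [hz, zero_mulVec]
    rw [mul_sub, mul_one] at h0
    exact (sub_eq_zero.mp h0).symm
  have hστρ : σ * T * ρ = ρ := by
    have h := congrArg conjTranspose hρστ
    rw [conjTranspose_mul, conjTranspose_mul, hTherm, hσ.1.eq, hρ.1.eq] at h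
    rw [hcomm]
    exact h
  set A : Matrix (Fin n) (Fin n) ℂ := T * ρ with hA
  have hσA : σ * A = ρ := by
    rw [hA, ← mul_assoc σ T ρ]
    exact hστρ
  have hAσ : Aᴴ * σ = ρ := by
    have h := congrArg conjTranspose hσA
    rwa [conjTranspose_mul, hσ.1.eq, hρ.1.eq] at h
  have hσAA : σ * (A * Aᴴ) = ρ * ρ * T := by
    calc σ * (A * Aᴴ) = σ * A * Aᴴ := (mul_assoc σ A Aᴴ).symm
      _ = ρ * Aᴴ := by rw [hσA]
      _ = ρ * (ρᴴ * Tᴴ) := by rw [hA, conjTranspose_mul]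
      _ = ρ * ρ * T := by rw [hρ.1.eq, hTherm, ← mul_assoc]
  set c : ℝ := (trace (ρ * ρ * T)).re with hc
  have expand : ∀ Z : Matrix (Fin n) (Fin n) ℂ,
      (trace (ρ * (Zᴴ + Z))).re + (trace (σ * (Z * Zᴴ))).re
        = (trace (σ * ((Z + A) * (Z + A)ᴴ))).re - c := by
    intro Z
    have h1 : trace (σ * ((Z + A) * (Z + A)ᴴ))
        = trace (σ * (Z * Zᴴ)) + trace (ρ * Z) + trace (ρ * Zᴴ) + trace (ρ * ρ * T) := by
      have hexp : σ * ((Z + A) * (Z + A)ᴴ)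
          = σ * (Z * Zᴴ) + σ * (Z * Aᴴ) + σ * (A * Zᴴ) + σ * (A * Aᴴ) := by
        rw [conjTranspose_add]
        noncomm_ring
      have h2 : trace (σ * (Z * Aᴴ)) = trace (ρ * Z) := by
        rw [trace_mul_comm, mul_assoc Z Aᴴ σ, hAσ, trace_mul_comm]
      have h3 : trace (σ * (A * Zᴴ)) = trace (ρ * Zᴴ) := by
        rw [← mul_assoc σ A Zᴴ, hσA]
      rw [hexp, trace_add, trace_add, trace_add, h2, h3, hσAA]
    have h4 : trace (ρ * (Zᴴ + Z)) = trace (ρ * Zᴴ) + trace (ρ * Z) := by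
      rw [mul_add, trace_add]
    rw [h1, h4]
    simp only [Complex.add_re]
    ring
  have hnonneg : ∀ W : Matrix (Fin n) (Fin n) ℂ, 0 ≤ (trace (σ * (W * Wᴴ))).re := by
    intro W
    have h : trace (σ * (W * Wᴴ)) = trace (Wᴴ * σ * W) := by
      rw [← mul_assoc σ W Wᴴ, trace_mul_cycle]
    rw [h]
    exact psd_trace_re_nonneg' (hσ.conjTranspose_mul_mul_same W)
  have hbound : ∀ Z : Matrix (Fin n) (Fin n) ℂ,
      -c ≤ (trace (ρ * (Zᴴ + Z))).re + (trace (σ * (Z * Zᴴ))).re := by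
    intro Z
    rw [expand Z]
    have := hnonneg (Z + A)
    linarith
  have hval : (trace (ρ * ((-A)ᴴ + -A))).re + (trace (σ * (-A * (-A)ᴴ))).re = -c := by
    rw [expand (-A)]
    simp
  have hinf : (⨅ Z : Matrix (Fin n) (Fin n) ℂ,
      ((trace (ρ * (Zᴴ + Z))).re + (trace (σ * (Z * Zᴴ))).re)) = -c := by
    apply le_antisymm
    · have hle : (⨅ Z : Matrix (Fin n) (Fin n) ℂ,
          ((trace (ρ * (Zᴴ + Z))).re + (trace (σ * (Z * Zᴴ))).re))
          ≤ (trace (ρ * ((-A)ᴴ + -A))).re + (trace (σ * (-A * (-A)ᴴ))).re := by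
        apply ciInf_le
        refine ⟨-c, ?_⟩
        rintro x ⟨Z, rfl⟩
        exact hbound Z
      exact hle.trans (le_of_eq hval)
    · exact le_ciInf hbound
  rw [hinf, neg_neg]
end

section
/- Let ρ, σ be positive semi-definite operators on a finite-dimensional Hilbert space and suppose ρ ≤ β·σ for some constant β > 0. Then Tr[ρ² σ⁻¹] ≤ β · Tr[ρ], where σ⁻¹ is the pseudo-inverse of σ. -/
open Matrix
open scoped ComplexOrder

namespace Stmt7Aux

variable {n : ℕ}

lemma contOn (A : Matrix (Fin n) (Fin n) ℂ) (f : ℝ → ℝ) :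
    ContinuousOn f (spectrum ℝ A) :=
  (Matrix.finite_real_spectrum (A := A)).continuousOn f

/-- A matrix that is both PSD and minus-PSD is zero. -/
lemma eq_zero_of_psd_of_neg_psd {M : Matrix (Fin n) (Fin n) ℂ} (h1 : M.PosSemidef)
    (h2 : (-M).PosSemidef) : M = 0 := by
  obtain ⟨B, rfl⟩ : ∃ B : Matrix (Fin n) (Fin n) ℂ, M = Bᴴ * B := by
    open scoped MatrixOrder in
    exact ⟨CFC.sqrt M, by rw [(CFC.sqrt_nonneg M).posSemidef.1.eq, CFC.sqrt_mul_sqrt_self M h1.nonneg]⟩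
  rw [Matrix.conjTranspose_mul_self_eq_zero]
  have hB : ∀ x : Fin n → ℂ, B *ᵥ x = 0 := by
    intro x
    have h := h2.dotProduct_mulVec_nonneg x
    have key : dotProduct (star x) ((Bᴴ * B) *ᵥ x) = dotProduct (star (B *ᵥ x)) (B *ᵥ x) := by
      rw [← Matrix.mulVec_mulVec, Matrix.dotProduct_mulVec, ← Matrix.star_mulVec]
    rw [Matrix.neg_mulVec, dotProduct_neg, key] at h
    have h' : dotProduct (star (B *ᵥ x)) (B *ᵥ x) ≤ 0 := neg_nonneg.mp h
    have h'' : (0 : ℂ) ≤ dotProduct (star (B *ᵥ x)) (B *ᵥ x) :=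
      dotProduct_star_self_nonneg _
    have : dotProduct (star (B *ᵥ x)) (B *ᵥ x) = 0 := le_antisymm h' h''
    exact dotProduct_star_self_eq_zero.mp this
  ext i j
  have := congrFun (hB (Pi.single j 1)) i
  simpa [Matrix.mulVec_single] using this

lemma trace_re_nonneg {M : Matrix (Fin n) (Fin n) ℂ} (hM : M.PosSemidef) :
    0 ≤ (Matrix.trace M).re := by
  have h : ∀ i, (0 : ℂ) ≤ M i i := by
    intro i
    exact hM.diag_nonneg
  rw [Matrix.trace]
  rw [Complex.re_sum]
  exact Finset.sum_nonneg fun i _ => (Complex.le_def.mp (h i)).1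

lemma cfc_psd {σ : Matrix (Fin n) (Fin n) ℂ} (hσ : σ.IsHermitian) (f : ℝ → ℝ)
    (hf : ∀ x, 0 ≤ f x) : (cfc f σ).PosSemidef := by
  rw [hσ.cfc_eq f, Matrix.IsHermitian.cfc, Unitary.conjStarAlgAut_apply,
    Matrix.star_eq_conjTranspose]
  refine (Matrix.PosSemidef.diagonal ?_).mul_mul_conjTranspose_same _
  intro i
  simpa using Complex.zero_le_real.mpr (hf _)

end Stmt7Aux

open Stmt7Aux in
/-- Let `ρ, σ` be positive semi-definite operators on a finite-dimensional Hilbert space with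
`ρ ≤ β·σ` for some `β > 0` (i.e. `β·σ − ρ` is positive semi-definite).  Then
`Tr[ρ² σ⁻¹] ≤ β·Tr[ρ]`, where `σ⁻¹` is the pseudo-inverse of `σ`. -/
theorem stmt7 {n : ℕ} (ρ σ : Matrix (Fin n) (Fin n) ℂ) (β : ℝ)
    (hρ : ρ.PosSemidef) (hσ : σ.PosSemidef) (hβ : 0 < β)
    (hle : ((β : ℂ) • σ - ρ).PosSemidef) :
    (trace (ρ * ρ * matPinv σ)).re ≤ β * (trace ρ).re := by
  classical
  have hσh : σ.IsHermitian := hσ.1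
  have hσsa : IsSelfAdjoint σ := hσh
  have hspec : ∀ x ∈ spectrum ℝ σ, 0 ≤ x := by
    rw [hσh.spectrum_real_eq_range_eigenvalues]
    rintro x ⟨i, rfl⟩
    exact hσ.eigenvalues_nonneg i
  set e : ℝ → ℝ := fun x => if x = 0 then 1 else 0 with he
  set q : ℝ → ℝ := fun x => (Real.sqrt x)⁻¹ with hq
  set Q : Matrix (Fin n) (Fin n) ℂ := cfc q σ with hQdef
  set S : Matrix (Fin n) (Fin n) ℂ := cfc Real.sqrt σ with hSdef
  set E : Matrix (Fin n) (Fin n) ℂ := cfc e σ with hEdef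
  have hQh : Q.IsHermitian := cfc_predicate q σ
  have hSh : S.IsHermitian := cfc_predicate Real.sqrt σ
  have hEh : E.IsHermitian := cfc_predicate e σ
  -- basic cfc products
  have hQQ : Q * Q = matPinv σ := by
    rw [matPinv, ← cfc_mul q q σ (contOn σ q) (contOn σ q)]
    refine cfc_congr fun x hx => ?_
    have hx0 : 0 ≤ x := hspec x hx
    simp only [hq, ← mul_inv, Real.mul_self_sqrt hx0]
  have hSS : S * S = σ := by
    rw [← cfc_mul _ _ σ (contOn σ _) (contOn σ _)]
    have : cfc (fun x => Real.sqrt x * Real.sqrt x) σ = cfc (fun x : ℝ => x) σ :=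
      cfc_congr fun x hx => Real.mul_self_sqrt (hspec x hx)
    rw [this, cfc_id' ℝ σ hσsa]
  have hSQ : S * Q = 1 - E := by
    have h1 : cfc (fun x => Real.sqrt x * q x) σ = cfc (fun x => 1 - e x) σ := by
      refine cfc_congr fun x hx => ?_
      by_cases hx0 : x = 0
      · simp [hq, he, hx0]
      · have : Real.sqrt x ≠ 0 := by
          rw [Real.sqrt_ne_zero (hspec x hx)]
          exact hx0
        simp [hq, he, hx0, mul_inv_cancel₀ this]
    rw [← cfc_mul _ _ σ (contOn σ _) (contOn σ _), h1,
      cfc_sub (fun _ : ℝ => (1:ℝ)) e σ (contOn σ _) (contOn σ _), cfc_const_one ℝ σ hσsa]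
  have hQS : Q * S = 1 - E := by
    have h1 : cfc (fun x => q x * Real.sqrt x) σ = cfc (fun x => Real.sqrt x * q x) σ :=
      cfc_congr fun x _ => mul_comm _ _
    rw [← cfc_mul _ _ σ (contOn σ _) (contOn σ _), h1,
      cfc_mul _ _ σ (contOn σ _) (contOn σ _), hSQ]
  have hEQ : E * Q = 0 := by
    rw [← cfc_mul e q σ (contOn σ _) (contOn σ _)]
    have : cfc (fun x => e x * q x) σ = cfc (fun _ : ℝ => (0:ℝ)) σ := by
      refine cfc_congr fun x _ => ?_
      by_cases hx0 : x = 0 <;> simp [he, hq, hx0]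
    rw [this, cfc_const_zero]
  have hQE : Q * E = 0 := by
    rw [← cfc_mul q e σ (contOn σ _) (contOn σ _)]
    have : cfc (fun x => q x * e x) σ = cfc (fun _ : ℝ => (0:ℝ)) σ := by
      refine cfc_congr fun x _ => ?_
      by_cases hx0 : x = 0 <;> simp [he, hq, hx0]
    rw [this, cfc_const_zero]
  have hEσ : E * σ = 0 := by
    conv_lhs => rw [← cfc_id' ℝ σ hσsa]
    rw [← cfc_mul e _ σ (contOn σ _) (contOn σ _)]
    have : cfc (fun x => e x * x) σ = cfc (fun _ : ℝ => (0:ℝ)) σ := by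
      refine cfc_congr fun x _ => ?_
      by_cases hx0 : x = 0 <;> simp [he, hx0]
    rw [this, cfc_const_zero]
  have hQσQ : Q * σ * Q = 1 - E := by
    have h1 : Q * σ = cfc (fun x => q x * x) σ := by
      conv_lhs => rw [← cfc_id' ℝ σ hσsa]
      rw [← cfc_mul q _ σ (contOn σ _) (contOn σ _)]
    rw [h1, ← cfc_mul _ q σ (contOn σ _) (contOn σ _)]
    have h2 : cfc (fun x => (q x * x) * q x) σ = cfc (fun x => 1 - e x) σ := by
      refine cfc_congr fun x hx => ?_
      by_cases hx0 : x = 0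
      · simp [hq, he, hx0]
      · have hxpos : 0 < x := lt_of_le_of_ne (hspec x hx) (Ne.symm hx0)
        have hs : Real.sqrt x ≠ 0 := by
          rw [Real.sqrt_ne_zero (hspec x hx)]; exact hx0
        have hxx : x = Real.sqrt x * Real.sqrt x := (Real.mul_self_sqrt (le_of_lt hxpos)).symm
        simp only [hq, he, hx0, if_false, sub_zero]
        rw [mul_comm, ← mul_assoc, ← mul_inv, Real.mul_self_sqrt hxpos.le, inv_mul_cancel₀ hx0]
    rw [h2, cfc_sub (fun _ : ℝ => (1:ℝ)) e σ (contOn σ _) (contOn σ _), cfc_const_one ℝ σ hσsa]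
  -- kernel of σ is contained in kernel of ρ
  have hEρE : E * ρ * E = 0 := by
    have hc1 : ((E * ((β : ℂ) • σ - ρ)) * Eᴴ).PosSemidef := hle.mul_mul_conjTranspose_same E
    rw [hEh.eq] at hc1
    have hexp : E * ((β : ℂ) • σ - ρ) * E = -(E * ρ * E) := by
      rw [mul_sub, sub_mul]
      rw [mul_smul_comm, smul_mul_assoc, hEσ]
      simp
    rw [hexp] at hc1
    have hpsd : (E * ρ * E).PosSemidef := by
      have := hρ.mul_mul_conjTranspose_same E
      rwa [hEh.eq] at this
    exact eq_zero_of_psd_of_neg_psd hpsd hc1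
  have hρE : ρ * E = 0 := by
    open scoped MatrixOrder in
    set R : Matrix (Fin n) (Fin n) ℂ := CFC.sqrt ρ with hR
    open scoped MatrixOrder in
    have hRh : R.IsHermitian := (CFC.sqrt_nonneg ρ).posSemidef.1
    open scoped MatrixOrder in
    have hRR : R * R = ρ := CFC.sqrt_mul_sqrt_self ρ hρ.nonneg
    have key : (R * E)ᴴ * (R * E) = E * ρ * E := by
      rw [conjTranspose_mul, hRh.eq, hEh.eq]
      rw [show E * R * (R * E) = E * (R * R) * E by simp only [mul_assoc], hRR]
    have hRE : R * E = 0 := by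
      rw [← Matrix.conjTranspose_mul_self_eq_zero (A := R * E), key, hEρE]
    calc ρ * E = R * (R * E) := by rw [← mul_assoc, hRR]
      _ = 0 := by rw [hRE, mul_zero]
  have hEρ : E * ρ = 0 := by
    have : (ρ * E)ᴴ = E * ρ := by rw [conjTranspose_mul, hEh.eq, hρ.1.eq]
    rw [← this, hρE, conjTranspose_zero]
  have hPr : (1 - E) * ρ = ρ := by rw [sub_mul, one_mul, hEρ, sub_zero]
  have hrP : ρ * (1 - E) = ρ := by rw [mul_sub, mul_one, hρE, sub_zero]
  -- the central matrix X
  set X : Matrix (Fin n) (Fin n) ℂ := Q * ρ * Q with hXdef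
  have hXpsd : X.PosSemidef := by
    have := hρ.mul_mul_conjTranspose_same Q
    rwa [hQh.eq] at this
  have hSXS : S * X * S = ρ := by
    calc S * X * S = (S * Q) * ρ * (Q * S) := by simp only [hXdef, mul_assoc]
      _ = (1 - E) * ρ * (1 - E) := by rw [hSQ, hQS]
      _ = ρ := by rw [hPr, hrP]
  have hρQ : ρ * Q = S * X := by
    calc ρ * Q = S * X * (S * Q) := by rw [← hSXS]; simp only [mul_assoc]
      _ = S * X * (1 - E) := by rw [hSQ]
      _ = S * X - S * (X * E) := by rw [mul_sub, mul_one, mul_assoc]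
      _ = S * X := by
          rw [show X * E = Q * ρ * (Q * E) by simp only [hXdef, mul_assoc], hQE, mul_zero,
            mul_zero, sub_zero]
  have hQρ : Q * ρ = X * S := by
    calc Q * ρ = (Q * S) * (X * S) := by rw [← hSXS]; simp only [mul_assoc]
      _ = (1 - E) * (X * S) := by rw [hQS]
      _ = X * S - E * (X * S) := by rw [sub_mul, one_mul]
      _ = X * S := by
          rw [show E * (X * S) = (E * Q) * (ρ * (Q * S)) by simp only [hXdef, mul_assoc], hEQ,
            zero_mul, sub_zero]
  -- X ≤ β • 1
  have hbPX : (((β : ℂ) • (1 - E)) - X).PosSemidef := by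
    have hc1 := hle.mul_mul_conjTranspose_same Q
    rw [hQh.eq] at hc1
    have hexp : Q * ((β : ℂ) • σ - ρ) * Q = ((β : ℂ) • (1 - E)) - X := by
      rw [mul_sub, sub_mul, mul_smul_comm, smul_mul_assoc, hQσQ, hXdef]
    rwa [hexp] at hc1
  have hβE : (((β : ℂ) • (1 : Matrix (Fin n) (Fin n) ℂ)) - ((β : ℂ) • (1 - E))).PosSemidef := by
    have heq : ((β : ℂ) • (1 : Matrix (Fin n) (Fin n) ℂ)) - ((β : ℂ) • (1 - E))
        = (β : ℂ) • E := by rw [← smul_sub, sub_sub_cancel]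
    rw [heq]
    have hcfc : cfc (fun x => β * e x) σ = (β : ℂ) • E := by
      rw [cfc_const_mul β e σ (contOn σ _)]
      ext i j
      simp [Matrix.smul_apply, Complex.real_smul, hEdef]
    rw [← hcfc]
    refine cfc_psd hσh _ fun x => ?_
    by_cases hx0 : x = 0 <;> simp [he, hx0, le_of_lt hβ]
  have hβX : (((β : ℂ) • (1 : Matrix (Fin n) (Fin n) ℂ)) - X).PosSemidef := by
    have := hβE.add hbPX
    rwa [sub_add_sub_cancel] at this
  -- square root of X
  open scoped MatrixOrder in
  set T : Matrix (Fin n) (Fin n) ℂ := CFC.sqrt X with hT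
  open scoped MatrixOrder in
  have hTh : T.IsHermitian := (CFC.sqrt_nonneg X).posSemidef.1
  open scoped MatrixOrder in
  have hTT : T * T = X := CFC.sqrt_mul_sqrt_self X hXpsd.nonneg
  -- the key PSD matrix
  have hST : (S * T)ᴴ = T * S := by rw [conjTranspose_mul, hTh.eq, hSh.eq]
  have hNpsd := hβX.mul_mul_conjTranspose_same (S * T)
  rw [hST] at hNpsd
  have hNeq : (S * T) * (((β : ℂ) • (1 : Matrix (Fin n) (Fin n) ℂ)) - X) * (T * S)
      = (β : ℂ) • ρ - S * (X * X) * S := by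
    have hTXT : T * X * T = X * X := by
      rw [← hTT, show T * (T * T) * T = (T * T) * (T * T) by simp only [mul_assoc]]
    have h1 : (S * T) * (((β : ℂ) • (1 : Matrix (Fin n) (Fin n) ℂ)) - X) * (T * S)
        = S * (T * (((β : ℂ) • (1 : Matrix (Fin n) (Fin n) ℂ)) - X) * T) * S := by
      simp only [mul_assoc]
    have h2 : T * (((β : ℂ) • (1 : Matrix (Fin n) (Fin n) ℂ)) - X) * T
        = (β : ℂ) • X - X * X := by
      rw [mul_sub, sub_mul, mul_smul_comm, smul_mul_assoc, mul_one, hTT, hTXT]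
    rw [h1, h2, mul_sub, sub_mul, mul_smul_comm, smul_mul_assoc, hSXS]
  rw [hNeq] at hNpsd
  have htr := trace_re_nonneg hNpsd
  -- trace identity
  have ht : trace (ρ * ρ * matPinv σ) = trace (S * (X * X) * S) := by
    rw [← hQQ]
    calc trace (ρ * ρ * (Q * Q)) = trace ((ρ * ρ * Q) * Q) := by simp only [mul_assoc]
      _ = trace (Q * (ρ * ρ * Q)) := trace_mul_comm _ Q
      _ = trace ((Q * ρ) * (ρ * Q)) := by simp only [mul_assoc]
      _ = trace ((X * S) * (S * X)) := by rw [hQρ, hρQ]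
      _ = trace ((S * X) * (X * S)) := trace_mul_comm _ _
      _ = trace (S * (X * X) * S) := by simp only [mul_assoc]
  rw [ht]
  rw [Matrix.trace_sub, Matrix.trace_smul] at htr
  simp only [Complex.sub_re, smul_eq_mul, Complex.mul_re, Complex.ofReal_re,
    Complex.ofReal_im, zero_mul, sub_zero] at htr
  linarith
end

section
/- Let ρ_AE = Σ_a |a⟩⟨a| ⊗ ρ_{E|a} and ρ'_AE = Σ_a |a⟩⟨a| ⊗ ρ'_{E|a} be (possibly subnormalized) classical-quantum operators on a finite-dimensional bipartite space, where {|a⟩} is an orthonormal basis of the classical register. Then for every t ∈ (0,1], inf_Z { (1/t)·Tr[ρ_AE (𝟙 + Z + Z† + (1-t)Z†Z)] + Tr[ρ'_AE Z Z†] } (infimum over all operators Z on the joint space) equals inf_{(Z_a)} Σ_a { (1/t)·Tr[ρ_{E|a} (𝟙 + Z_a + Z_a† + (1-t)Z_a†Z_a)] + Tr[ρ'_{E|a} Z_a Z_a†] } (infimum over families of operators Z_a on the E system only). -/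
open Matrix
open scoped ComplexOrder


namespace Stmt15Aux

lemma trace_re_nonneg {n : Type*} [Fintype n] [DecidableEq n] {M : Matrix n n ℂ}
    (hM : M.PosSemidef) : 0 ≤ (trace M).re := by
  have h : ∀ i, 0 ≤ (M i i).re := fun i => by
    have := hM.re_dotProduct_nonneg (Pi.single i 1)
    simpa [dotProduct, mulVec, Pi.single_apply, Finset.mul_sum] using this
  simpa [Matrix.trace, Matrix.diag, Complex.re_sum] using
    Finset.sum_nonneg fun i _ => h i

variable {a e : ℕ}

def Blk (Z : Matrix (Fin a × Fin e) (Fin a × Fin e) ℂ) (b c : Fin a) :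
    Matrix (Fin e) (Fin e) ℂ := fun i j => Z (b, i) (c, j)

lemma tr_quad_nonneg1 {n m : Type*} [Fintype n] [Fintype m] [DecidableEq m]
    {ρ : Matrix n n ℂ} (hρ : ρ.PosSemidef) (A : Matrix m n ℂ) :
    0 ≤ (trace (ρ * (Aᴴ * A))).re := by
  rw [← Matrix.mul_assoc, Matrix.trace_mul_cycle]
  exact trace_re_nonneg (hρ.mul_mul_conjTranspose_same A)

lemma tr_quad_nonneg2 {n m : Type*} [Fintype n] [Fintype m] [DecidableEq m]
    {ρ : Matrix n n ℂ} (hρ : ρ.PosSemidef) (A : Matrix n m ℂ) :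
    0 ≤ (trace (ρ * (A * Aᴴ))).re := by
  rw [← Matrix.mul_assoc, Matrix.trace_mul_cycle]
  exact trace_re_nonneg (hρ.conjTranspose_mul_mul_same A)

lemma trace_cq (ρE : Fin a → Matrix (Fin e) (Fin e) ℂ)
    (ρAE : Matrix (Fin a × Fin e) (Fin a × Fin e) ℂ)
    (hAE : ∀ p q, ρAE p q = if p.1 = q.1 then ρE p.1 p.2 q.2 else 0)
    (M : Matrix (Fin a × Fin e) (Fin a × Fin e) ℂ) :
    trace (ρAE * M) = ∑ x, trace (ρE x * Blk M x x) := by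
  simp only [Matrix.trace, Matrix.diag, mul_apply, hAE, Blk]
  rw [Fintype.sum_prod_type]
  refine Finset.sum_congr rfl fun x _ => ?_
  refine Finset.sum_congr rfl fun i _ => ?_
  rw [Fintype.sum_prod_type]
  simp [Finset.sum_ite_eq, ite_mul]

lemma blk_one (x : Fin a) : Blk (1 : Matrix (Fin a × Fin e) (Fin a × Fin e) ℂ) x x = 1 := by
  ext i j
  simp [Blk, Matrix.one_apply, Prod.ext_iff]

lemma blk_add (M N : Matrix (Fin a × Fin e) (Fin a × Fin e) ℂ) (b c : Fin a) :
    Blk (M + N) b c = Blk M b c + Blk N b c := rfl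

lemma blk_smul (r : ℂ) (M : Matrix (Fin a × Fin e) (Fin a × Fin e) ℂ) (b c : Fin a) :
    Blk (r • M) b c = r • Blk M b c := rfl

lemma blk_conjTranspose (M : Matrix (Fin a × Fin e) (Fin a × Fin e) ℂ) (b c : Fin a) :
    Blk Mᴴ b c = (Blk M c b)ᴴ := rfl

lemma blk_mul_conj_left (Z : Matrix (Fin a × Fin e) (Fin a × Fin e) ℂ) (x : Fin a) :
    Blk (Zᴴ * Z) x x = ∑ b, (Blk Z b x)ᴴ * Blk Z b x := by
  ext i j
  simp only [Blk, mul_apply, conjTranspose_apply, Matrix.sum_apply]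
  rw [Fintype.sum_prod_type]

lemma blk_mul_conj_right (Z : Matrix (Fin a × Fin e) (Fin a × Fin e) ℂ) (x : Fin a) :
    Blk (Z * Zᴴ) x x = ∑ b, Blk Z x b * (Blk Z x b)ᴴ := by
  ext i j
  simp only [Blk, mul_apply, conjTranspose_apply, Matrix.sum_apply]
  rw [Fintype.sum_prod_type]


variable {a e : ℕ}

lemma split_small (ρ W : Matrix (Fin e) (Fin e) ℂ) (c : ℂ) :
    trace (ρ * (1 + W + Wᴴ + c • (Wᴴ * W))) =
      trace (ρ * (1 + W + Wᴴ)) + c * trace (ρ * (Wᴴ * W)) := by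
  simp [Matrix.mul_add, Matrix.mul_smul, trace_add, trace_smul, smul_eq_mul]

lemma expand_left (ρE : Fin a → Matrix (Fin e) (Fin e) ℂ)
    (ρAE : Matrix (Fin a × Fin e) (Fin a × Fin e) ℂ)
    (hAE : ∀ p q, ρAE p q = if p.1 = q.1 then ρE p.1 p.2 q.2 else 0)
    (Z : Matrix (Fin a × Fin e) (Fin a × Fin e) ℂ) (c : ℂ) :
    trace (ρAE * (1 + Z + Zᴴ + c • (Zᴴ * Z))) =
      ∑ x, (trace (ρE x * (1 + Blk Z x x + (Blk Z x x)ᴴ)) +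
        c * ∑ b, trace (ρE x * ((Blk Z b x)ᴴ * Blk Z b x))) := by
  rw [trace_cq ρE ρAE hAE]
  refine Finset.sum_congr rfl fun x _ => ?_
  rw [blk_add, blk_add, blk_add, blk_one, blk_conjTranspose, blk_smul, blk_mul_conj_left]
  simp [Matrix.mul_add, Matrix.mul_smul, Matrix.mul_sum, trace_add, trace_smul,
    Matrix.trace_sum, Finset.mul_sum, smul_eq_mul]

lemma expand_right (ρE' : Fin a → Matrix (Fin e) (Fin e) ℂ)
    (ρAE' : Matrix (Fin a × Fin e) (Fin a × Fin e) ℂ)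
    (hAE' : ∀ p q, ρAE' p q = if p.1 = q.1 then ρE' p.1 p.2 q.2 else 0)
    (Z : Matrix (Fin a × Fin e) (Fin a × Fin e) ℂ) :
    trace (ρAE' * (Z * Zᴴ)) =
      ∑ x, ∑ b, trace (ρE' x * (Blk Z x b * (Blk Z x b)ᴴ)) := by
  rw [trace_cq ρE' ρAE' hAE']
  refine Finset.sum_congr rfl fun x _ => ?_
  rw [blk_mul_conj_right]
  simp [Matrix.mul_sum, Matrix.trace_sum]


/-- Infima agree when each family is dominated by the other. -/
lemma iInf_eq_iInf_of_dominates {I K : Type*} [Nonempty I] [Nonempty K]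
    (f : I → ℝ) (g : K → ℝ)
    (h1 : ∀ i, ∃ j, g j ≤ f i) (h2 : ∀ j, ∃ i, f i ≤ g j) :
    ⨅ i, f i = ⨅ j, g j := by
  by_cases hb : BddBelow (Set.range g)
  · have hbf : BddBelow (Set.range f) := by
      obtain ⟨m, hm⟩ := hb
      refine ⟨m, ?_⟩
      rintro _ ⟨i, rfl⟩
      obtain ⟨j, hj⟩ := h1 i
      exact le_trans (hm ⟨j, rfl⟩) hj
    refine le_antisymm ?_ ?_
    · refine le_ciInf fun j => ?_
      obtain ⟨i, hi⟩ := h2 j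
      exact le_trans (ciInf_le hbf i) hi
    · refine le_ciInf fun i => ?_
      obtain ⟨j, hj⟩ := h1 i
      exact le_trans (ciInf_le hb j) hj
  · have hbf : ¬ BddBelow (Set.range f) := by
      rintro ⟨m, hm⟩
      refine hb ⟨m, ?_⟩
      rintro _ ⟨j, rfl⟩
      obtain ⟨i, hi⟩ := h2 j
      exact le_trans (hm ⟨i, rfl⟩) hi
    rw [Real.iInf_of_not_bddBelow hbf, Real.iInf_of_not_bddBelow hb]

end Stmt15Aux




set_option maxHeartbeats 1000000
open Stmt15Aux

/-- **Block reduction of the variational optimization.**  Let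
`ρ_AE = Σ_a |a⟩⟨a| ⊗ ρ_{E|a}` and `ρ'_AE = Σ_a |a⟩⟨a| ⊗ ρ'_{E|a}` be (possibly subnormalized)
classical-quantum operators, with each `ρ_{E|a}, ρ'_{E|a}` positive semi-definite on a
finite-dimensional space `E`.  For every `t ∈ (0,1]`, the infimum over all operators `Z` on
the joint space of
`(1/t)·Tr[ρ_AE (𝟙 + Z + Z† + (1-t)Z†Z)] + Tr[ρ'_AE Z Z†]`
equals the infimum, over families `(Z_a)` of operators on `E` only, of
`Σ_a (1/t)·Tr[ρ_{E|a} (𝟙 + Z_a + Z_a† + (1-t)Z_a†Z_a)] + Tr[ρ'_{E|a} Z_a Z_a†]`. -/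
theorem stmt15 {a e : ℕ} (ρE ρE' : Fin a → Matrix (Fin e) (Fin e) ℂ)
    (hρE : ∀ x, (ρE x).PosSemidef) (hρE' : ∀ x, (ρE' x).PosSemidef)
    (ρAE ρAE' : Matrix (Fin a × Fin e) (Fin a × Fin e) ℂ)
    (hAE : ∀ p q, ρAE p q = if p.1 = q.1 then ρE p.1 p.2 q.2 else 0)
    (hAE' : ∀ p q, ρAE' p q = if p.1 = q.1 then ρE' p.1 p.2 q.2 else 0)
    (t : ℝ) (ht : t ∈ Set.Ioc (0 : ℝ) 1) :
    (⨅ Z : Matrix (Fin a × Fin e) (Fin a × Fin e) ℂ,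
      ((1 / t) * (trace (ρAE * (1 + Z + Zᴴ + ((1 - t : ℝ) : ℂ) • (Zᴴ * Z)))).re +
        (trace (ρAE' * (Z * Zᴴ))).re)) =
    ⨅ Za : Fin a → Matrix (Fin e) (Fin e) ℂ,
      ∑ x, ((1 / t) * (trace (ρE x *
              (1 + Za x + (Za x)ᴴ + ((1 - t : ℝ) : ℂ) • ((Za x)ᴴ * Za x)))).re +
            (trace (ρE' x * (Za x * (Za x)ᴴ))).re) := by
  obtain ⟨ht0, ht1⟩ := ht
  have h1t : (0:ℝ) ≤ 1 / t := by positivity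
  have hsub : (0:ℝ) ≤ 1 - t := by linarith
  refine iInf_eq_iInf_of_dominates _ _ ?_ ?_
  · -- general Z dominated by its diagonal blocks
    intro Z
    refine ⟨fun x => Blk Z x x, ?_⟩
    rw [expand_left ρE ρAE hAE Z _, expand_right ρE' ρAE' hAE' Z,
      Complex.re_sum, Complex.re_sum, Finset.mul_sum, ← Finset.sum_add_distrib]
    refine Finset.sum_le_sum fun x _ => ?_
    rw [split_small]
    simp only [Complex.add_re, Complex.re_ofReal_mul, Complex.re_sum]
    have hq : (trace (ρE x * ((Blk Z x x)ᴴ * Blk Z x x))).re ≤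
        ∑ b, (trace (ρE x * ((Blk Z b x)ᴴ * Blk Z b x))).re :=
      Finset.single_le_sum (f := fun b => (trace (ρE x * ((Blk Z b x)ᴴ * Blk Z b x))).re)
        (fun b _ => tr_quad_nonneg1 (hρE x) _) (Finset.mem_univ x)
    have hq' : (trace (ρE' x * (Blk Z x x * (Blk Z x x)ᴴ))).re ≤
        ∑ b, (trace (ρE' x * (Blk Z x b * (Blk Z x b)ᴴ))).re :=
      Finset.single_le_sum (f := fun b => (trace (ρE' x * (Blk Z x b * (Blk Z x b)ᴴ))).re)
        (fun b _ => tr_quad_nonneg2 (hρE' x) _) (Finset.mem_univ x)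
    nlinarith [mul_le_mul_of_nonneg_left hq hsub]
  · -- block-diagonal Z achieves the small objective exactly
    intro Za
    refine ⟨fun p q => if p.1 = q.1 then Za p.1 p.2 q.2 else 0, le_of_eq ?_⟩
    set Z : Matrix (Fin a × Fin e) (Fin a × Fin e) ℂ :=
      fun p q => if p.1 = q.1 then Za p.1 p.2 q.2 else 0 with hZ
    have hdiag : ∀ x, Blk Z x x = Za x := by
      intro x; ext i j; simp [Blk, hZ]
    have hoff : ∀ b x, b ≠ x → Blk Z b x = 0 := by
      intro b x hbx; ext i j; simp [Blk, hZ, hbx]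
    rw [expand_left ρE ρAE hAE Z _, expand_right ρE' ρAE' hAE' Z,
      Complex.re_sum, Complex.re_sum, Finset.mul_sum, ← Finset.sum_add_distrib]
    refine Finset.sum_congr rfl fun x _ => ?_
    have hsum1 : ∑ b, trace (ρE x * ((Blk Z b x)ᴴ * Blk Z b x)) =
        trace (ρE x * ((Za x)ᴴ * Za x)) := by
      rw [Finset.sum_eq_single x (fun b _ hb => by simp [hoff b x hb])
        (by simp), hdiag]
    have hsum2 : ∑ b, trace (ρE' x * (Blk Z x b * (Blk Z x b)ᴴ)) =
        trace (ρE' x * (Za x * (Za x)ᴴ)) := by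
      rw [Finset.sum_eq_single x (fun b _ hb => by simp [hoff x b (Ne.symm hb)])
        (by simp), hdiag]
    rw [hsum1, hsum2, hdiag, split_small]
end
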